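/- For the indicator V of [0,b], the Agmon–Hörmander eigenvalues Λ_k = π·∫_0^b J_{k+(d−2)/2}(r)² r dr satisfy log Λ_k ∼ −2k·log k as k → ∞, i.e. (log Λ_k)/(k log k) → −2. -/

import Mathlib

open Real Filter

/-- Bessel function of the first kind of real order `ν ≥ 0`, power-series definition. -/
noncomputable def besselJR (ν : ℝ) (r : ℝ) : ℝ :=
  ∑' n : ℕ, (-1 : ℝ) ^ n * (r / 2) ^ (2 * (n : ℝ) + ν) /
    ((Nat.factorial n : ℝ) * Real.Gamma ((n : ℝ) + ν + 1))

noncomputable def bterm (ν : ℝ) (n : ℕ) (r : ℝ) : ℝ :=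
  (-1 : ℝ) ^ n * (r / 2) ^ (2 * (n : ℝ) + ν) /
    ((Nat.factorial n : ℝ) * Real.Gamma ((n : ℝ) + ν + 1))


lemma Gamma_prod (c : ℝ) (hc : 0 ≤ c) (n : ℕ) :
    Real.Gamma ((n:ℝ) + c + 1) = (∏ i ∈ Finset.range n, (c + i + 1)) * Real.Gamma (c + 1) := by
  induction n with
  | zero => simp
  | succ n ih =>
    have h1 : ((n:ℝ)+1) + c + 1 = ((n:ℝ) + c + 1) + 1 := by ring
    rw [Nat.cast_succ, h1, Real.Gamma_add_one (by positivity), ih, Finset.prod_range_succ]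
    ring

lemma fact_lb (n : ℕ) : ((n:ℝ)/Real.exp 1)^n ≤ (Nat.factorial n : ℝ) := by
  induction n with
  | zero => simp
  | succ n ih =>
    rcases Nat.eq_zero_or_pos n with h | h
    · subst h
      norm_num [Nat.factorial]
      rw [inv_le_one_iff₀]
      right; exact Real.one_le_exp zero_le_one
    · have hn : (0:ℝ) < n := by exact_mod_cast h
      have key : ((n:ℝ)+1)^n ≤ Real.exp 1 * (n:ℝ)^n := by
        have h1 : ((n:ℝ)+1)^n = (n:ℝ)^n * (1 + 1/n)^n := by
          rw [← mul_pow]; congr 1; field_simp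
        have h2 : (1 + 1/(n:ℝ))^n ≤ (Real.exp (1/n))^n := by
          apply pow_le_pow_left₀ (by positivity)
          rw [add_comm]; exact Real.add_one_le_exp _
        have h3 : (Real.exp (1/(n:ℝ)))^n = Real.exp 1 := by
          rw [← Real.exp_nat_mul]; congr 1; field_simp
        rw [h3] at h2
        calc ((n:ℝ)+1)^n = (n:ℝ)^n * (1 + 1/n)^n := h1
          _ ≤ (n:ℝ)^n * Real.exp 1 := by
              exact mul_le_mul_of_nonneg_left h2 (by positivity)
          _ = Real.exp 1 * (n:ℝ)^n := by ring
      have e1 : (0:ℝ) < Real.exp 1 := Real.exp_pos 1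
      push_cast
      calc (((n:ℝ)+1)/Real.exp 1)^(n+1)
          = ((n:ℝ)+1) * (((n:ℝ)+1)^n / ((Real.exp 1)^n * Real.exp 1)) := by
            rw [div_pow, pow_succ]; ring
        _ ≤ ((n:ℝ)+1) * ((Real.exp 1 * (n:ℝ)^n) / ((Real.exp 1)^n * Real.exp 1)) := by
            apply mul_le_mul_of_nonneg_left _ (by positivity)
            exact div_le_div_of_nonneg_right key (by positivity)
        _ = ((n:ℝ)+1) * ((n:ℝ)/Real.exp 1)^n := by
            rw [div_pow]; field_simp
        _ ≤ ((n:ℝ)+1) * (Nat.factorial n : ℝ) := by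
            exact mul_le_mul_of_nonneg_left ih (by positivity)
        _ = (Nat.factorial (n+1) : ℝ) := by
            rw [Nat.factorial_succ]; push_cast; ring

lemma bterm_abs_le {ν r : ℝ} (hν : 1 ≤ ν) (hr : 0 ≤ r) (n : ℕ) :
    |bterm ν n r| ≤ (r/2)^ν / Real.Gamma (ν+1) * ((r/2)^2/(ν+1))^n := by
  have hν0 : (0:ℝ) < ν := lt_of_lt_of_le one_pos hν
  have hG : 0 < Real.Gamma (ν+1) := Real.Gamma_pos_of_pos (by linarith)
  rcases eq_or_lt_of_le hr with h | h
  · have : (0:ℝ) ^ (2*(n:ℝ)+ν) = 0 := Real.zero_rpow (by positivity)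
    simp [bterm, ← h, this, Real.zero_rpow hν0.ne']
  · have h2 : 0 < r/2 := by linarith
    have hG2 : 0 < Real.Gamma ((n:ℝ) + ν + 1) := Real.Gamma_pos_of_pos (by positivity)
    have habs : |bterm ν n r| = (r/2)^(2*(n:ℝ)+ν) / ((Nat.factorial n : ℝ) * Real.Gamma ((n:ℝ)+ν+1)) := by
      rw [bterm, abs_div, abs_mul, abs_pow, abs_neg, abs_one, one_pow, one_mul,
        abs_of_pos (Real.rpow_pos_of_pos h2 _), abs_of_pos (by positivity)]
    rw [habs]
    have hsplit : (r/2)^(2*(n:ℝ)+ν) = ((r/2)^2)^n * (r/2)^ν := by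
      rw [Real.rpow_add h2, show (2*(n:ℝ)) = ((2*n:ℕ):ℝ) by push_cast; ring,
        Real.rpow_natCast, pow_mul]
    have hGn : (ν+1)^n * Real.Gamma (ν+1) ≤ Real.Gamma ((n:ℝ)+ν+1) := by
      rw [Gamma_prod ν hν0.le n]
      apply mul_le_mul_of_nonneg_right _ hG.le
      calc (ν+1)^n = ∏ _i ∈ Finset.range n, (ν+1) := by rw [Finset.prod_const, Finset.card_range]
        _ ≤ ∏ i ∈ Finset.range n, (ν + i + 1) := by
            apply Finset.prod_le_prod (fun i _ => by positivity)
            intro i _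
            have : (0:ℝ) ≤ i := Nat.cast_nonneg i
            linarith
    have hfac : (1:ℝ) ≤ (Nat.factorial n : ℝ) := by exact_mod_cast Nat.one_le_iff_ne_zero.mpr (Nat.factorial_ne_zero n)
    have hden : (ν+1)^n * Real.Gamma (ν+1) ≤ (Nat.factorial n : ℝ) * Real.Gamma ((n:ℝ)+ν+1) := by
      calc (ν+1)^n * Real.Gamma (ν+1) ≤ Real.Gamma ((n:ℝ)+ν+1) := hGn
        _ = 1 * Real.Gamma ((n:ℝ)+ν+1) := (one_mul _).symm
        _ ≤ (Nat.factorial n : ℝ) * Real.Gamma ((n:ℝ)+ν+1) := by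
            apply mul_le_mul_of_nonneg_right hfac hG2.le
    rw [hsplit]
    rw [div_le_iff₀ (by positivity)]
    have key : ((r/2)^2)^n * (r/2)^ν * ((ν+1)^n * Real.Gamma (ν+1))
        ≤ ((r/2)^2)^n * (r/2)^ν * ((Nat.factorial n : ℝ) * Real.Gamma ((n:ℝ)+ν+1)) := by
      apply mul_le_mul_of_nonneg_left hden (by positivity)
    have hrw : (r/2)^ν / Real.Gamma (ν+1) * ((r/2)^2/(ν+1))^n * ((Nat.factorial n : ℝ) * Real.Gamma ((n:ℝ)+ν+1))
        = ((r/2)^2)^n * (r/2)^ν * ((Nat.factorial n : ℝ) * Real.Gamma ((n:ℝ)+ν+1)) / ((ν+1)^n * Real.Gamma (ν+1)) := by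
      rw [div_pow]; field_simp
    rw [hrw, le_div_iff₀ (by positivity)]
    calc ((r/2)^2)^n * (r/2)^ν * ((ν+1)^n * Real.Gamma (ν+1))
        ≤ ((r/2)^2)^n * (r/2)^ν * ((Nat.factorial n : ℝ) * Real.Gamma ((n:ℝ)+ν+1)) := key

lemma bterm_summable {ν r : ℝ} (hν : 1 ≤ ν) (hr : 0 ≤ r) (hQ : (r/2)^2/(ν+1) ≤ 1/3) :
    Summable (fun n => bterm ν n r) := by
  have hQ0 : 0 ≤ (r/2)^2/(ν+1) := by positivity
  apply Summable.of_abs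
  apply Summable.of_nonneg_of_le (fun n => abs_nonneg _) (bterm_abs_le hν hr)
  exact ((summable_geometric_of_lt_one hQ0 (by linarith)).mul_left _)

lemma bessel_squeeze {ν r : ℝ} (hν : 1 ≤ ν) (hr : 0 ≤ r) (hQ : (r/2)^2/(ν+1) ≤ 1/3) :
    |besselJR ν r - (r/2)^ν / Real.Gamma (ν+1)| ≤ (1/2) * ((r/2)^ν / Real.Gamma (ν+1)) := by
  set Q := (r/2)^2/(ν+1) with hQdef
  set t := (r/2)^ν / Real.Gamma (ν+1) with htdef
  have hQ0 : 0 ≤ Q := by positivity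
  have hQ1 : Q < 1 := by linarith
  have ht0 : 0 ≤ t := by
    have := Real.Gamma_pos_of_pos (show (0:ℝ) < ν + 1 by linarith)
    positivity
  have hsum := bterm_summable hν hr hQ
  have h0 : bterm ν 0 r = t := by
    simp [bterm, htdef, Nat.factorial]
  have hsplit : besselJR ν r = t + ∑' n, bterm ν (n+1) r := by
    rw [show besselJR ν r = ∑' n, bterm ν n r from rfl, Summable.tsum_eq_zero_add hsum, h0]
  have habs : ∀ n, |bterm ν (n+1) r| ≤ t * Q^(n+1) := fun n => bterm_abs_le hν hr (n+1)
  have hsum2 : Summable (fun n => t * Q^(n+1)) := by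
    simp_rw [pow_succ]
    exact (((summable_geometric_of_lt_one hQ0 hQ1).mul_right Q).mul_left t)
  have habsum : Summable (fun n => |bterm ν (n+1) r|) :=
    Summable.of_nonneg_of_le (fun n => abs_nonneg _) habs hsum2
  have key : |∑' n, bterm ν (n+1) r| ≤ t * (Q / (1-Q)) := by
    calc |∑' n, bterm ν (n+1) r| ≤ ∑' n, |bterm ν (n+1) r| := by
          simpa using norm_tsum_le_tsum_norm (f := fun n => bterm ν (n+1) r) (by simpa using habsum)
      _ ≤ ∑' n, t * Q^(n+1) := Summable.tsum_le_tsum habs habsum hsum2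
      _ = t * (Q / (1-Q)) := by
          have : ∀ n : ℕ, t * Q^(n+1) = (Q^n) * (t*Q) := by intro n; ring
          simp_rw [this]
          rw [tsum_mul_right, tsum_geometric_of_lt_one hQ0 hQ1]
          field_simp
  have hfrac : Q / (1-Q) ≤ 1/2 := by
    rw [div_le_iff₀ (by linarith)]
    linarith
  have : |besselJR ν r - t| = |∑' n, bterm ν (n+1) r| := by rw [hsplit, add_sub_cancel_left]
  rw [this]
  calc |∑' n, bterm ν (n+1) r| ≤ t * (Q/(1-Q)) := key
    _ ≤ t * (1/2) := mul_le_mul_of_nonneg_left hfrac ht0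
    _ = (1/2) * t := by ring

lemma bessel_cont {ν b : ℝ} (hν : 1 ≤ ν) (hb : 0 < b) (hQ : (b/2)^2/(ν+1) ≤ 1/3) :
    ContinuousOn (besselJR ν) (Set.Icc 0 b) := by
  have hG : 0 < Real.Gamma (ν+1) := Real.Gamma_pos_of_pos (by linarith)
  apply continuousOn_tsum (u := fun n => (b/2)^ν / Real.Gamma (ν+1) * ((b/2)^2/(ν+1))^n)
  · intro i
    apply Continuous.continuousOn
    apply Continuous.div_const
    apply Continuous.mul continuous_const
    rw [continuous_iff_continuousAt]
    intro x
    exact ContinuousAt.comp (Real.continuousAt_rpow_const _ _ (Or.inr (by positivity)))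
      (continuousAt_id.div_const 2)
  · apply (summable_geometric_of_lt_one (by positivity) (by linarith)).mul_left
  · intro n x hx
    rw [Real.norm_eq_abs]
    rcases hx with ⟨hx0, hxb⟩
    calc |bterm ν n x| ≤ (x/2)^ν / Real.Gamma (ν+1) * ((x/2)^2/(ν+1))^n := bterm_abs_le hν hx0 n
      _ ≤ (b/2)^ν / Real.Gamma (ν+1) * ((b/2)^2/(ν+1))^n := by
          gcongr <;> first
            | exact Real.Gamma_pos_of_pos (by linarith)
            | positivity
            | linarith

lemma klogk_atTop : Tendsto (fun k : ℕ => (k:ℝ) * Real.log k) atTop atTop := by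
  apply Tendsto.atTop_mul_atTop₀ tendsto_natCast_atTop_atTop
  exact Real.tendsto_log_atTop.comp tendsto_natCast_atTop_atTop

lemma invlog_to_zero : Tendsto (fun k : ℕ => (Real.log k)⁻¹) atTop (nhds 0) :=
  (Real.tendsto_log_atTop.comp tendsto_natCast_atTop_atTop).inv_tendsto_atTop

lemma const_div_klogk (D : ℝ) : Tendsto (fun k : ℕ => D / ((k:ℝ) * Real.log k)) atTop (nhds 0) :=
  Tendsto.div_atTop tendsto_const_nhds klogk_atTop

lemma logGamma_asymp (c : ℝ) (hc : 0 ≤ c) :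
    Tendsto (fun k : ℕ => Real.log (Real.Gamma ((k:ℝ) + c + 1)) / ((k:ℝ) * Real.log k))
      atTop (nhds 1) := by
  set D := Real.log (Real.Gamma (c+1)) with hD
  have hGc : 0 < Real.Gamma (c+1) := Real.Gamma_pos_of_pos (by linarith)
  -- bounds on log Gamma
  have key : ∀ k : ℕ, 2 ≤ k →
      (k:ℝ) * Real.log k - k + D ≤ Real.log (Real.Gamma ((k:ℝ) + c + 1)) ∧
      Real.log (Real.Gamma ((k:ℝ) + c + 1)) ≤ (k:ℝ) * Real.log k + (k:ℝ) * Real.log (1+c) + D := by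
    intro k hk
    have hk0 : (0:ℝ) < k := by positivity
    have hprodpos : ∀ i ∈ Finset.range k, (0:ℝ) < c + i + 1 := fun i _ => by positivity
    have hprodpos' : (0:ℝ) < ∏ i ∈ Finset.range k, (c + i + 1) :=
      Finset.prod_pos hprodpos
    have hlog : Real.log (Real.Gamma ((k:ℝ) + c + 1))
        = (∑ i ∈ Finset.range k, Real.log (c + i + 1)) + D := by
      rw [Gamma_prod c hc k, Real.log_mul hprodpos'.ne' hGc.ne', hD,
        Real.log_prod (fun i hi => (hprodpos i hi).ne')]
    have hfl : (k:ℝ) * Real.log k - k ≤ ∑ i ∈ Finset.range k, Real.log (c + i + 1) := by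
      have h1 : ∀ i ∈ Finset.range k, Real.log ((i:ℝ) + 1) ≤ Real.log (c + i + 1) := by
        intro i _
        apply Real.log_le_log (by positivity) (by linarith)
      have h2 : ∑ i ∈ Finset.range k, Real.log ((i:ℝ) + 1) = Real.log (Nat.factorial k : ℝ) := by
        rw [← Real.log_prod (fun i _ => by positivity)]
        congr 1
        push_cast [← Nat.cast_prod]
        exact_mod_cast congrArg (Nat.cast (R := ℝ)) (Finset.prod_range_add_one_eq_factorial k)
      have h3 : (k:ℝ) * Real.log k - k ≤ Real.log (Nat.factorial k : ℝ) := by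
        have := Real.log_le_log (by positivity) (fact_lb k)
        rw [Real.log_pow, Real.log_div hk0.ne' (Real.exp_pos 1).ne', Real.log_exp] at this
        calc (k:ℝ) * Real.log k - k = (k:ℝ) * (Real.log k - 1) := by ring
          _ ≤ Real.log (Nat.factorial k : ℝ) := this
      calc (k:ℝ) * Real.log k - k ≤ Real.log (Nat.factorial k : ℝ) := h3
        _ = ∑ i ∈ Finset.range k, Real.log ((i:ℝ) + 1) := h2.symm
        _ ≤ ∑ i ∈ Finset.range k, Real.log (c + i + 1) := Finset.sum_le_sum h1
    have hfu : ∑ i ∈ Finset.range k, Real.log (c + i + 1) ≤ (k:ℝ) * Real.log k + (k:ℝ) * Real.log (1+c) := by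
      have h1 : ∀ i ∈ Finset.range k, Real.log (c + i + 1) ≤ Real.log (1+c) + Real.log k := by
        intro i hi
        rw [← Real.log_mul (by positivity) hk0.ne']
        apply Real.log_le_log (by positivity)
        have hik : (i:ℝ) + 1 ≤ k := by
          have := Finset.mem_range.mp hi
          exact_mod_cast Nat.succ_le_of_lt this
        nlinarith [hik, hc, hk0]
      calc ∑ i ∈ Finset.range k, Real.log (c + i + 1)
          ≤ ∑ _i ∈ Finset.range k, (Real.log (1+c) + Real.log k) := Finset.sum_le_sum h1
        _ = (k:ℝ) * Real.log (1+c) + (k:ℝ) * Real.log k := by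
            rw [Finset.sum_const, Finset.card_range]; push_cast; ring
        _ = (k:ℝ) * Real.log k + (k:ℝ) * Real.log (1+c) := by ring
    constructor
    · rw [hlog]; linarith
    · rw [hlog]; linarith
  -- squeeze
  have hlower : Tendsto (fun k : ℕ => 1 - (Real.log k)⁻¹ + D / ((k:ℝ)*Real.log k)) atTop (nhds 1) := by
    have := ((tendsto_const_nhds (x := (1:ℝ))).sub invlog_to_zero).add (const_div_klogk D)
    simpa using this
  have hupper : Tendsto (fun k : ℕ => 1 + Real.log (1+c) * (Real.log k)⁻¹ + D / ((k:ℝ)*Real.log k)) atTop (nhds 1) := by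
    have := ((tendsto_const_nhds (x := (1:ℝ))).add (invlog_to_zero.const_mul (Real.log (1+c)))).add (const_div_klogk D)
    simpa using this
  apply tendsto_of_tendsto_of_tendsto_of_le_of_le' hlower hupper
  · filter_upwards [eventually_ge_atTop 2] with k hk
    have hk0 : (0:ℝ) < k := by positivity
    have hlk : 0 < Real.log k := Real.log_pos (by exact_mod_cast hk)
    have h := (key k hk).1
    have heq : 1 - (Real.log k)⁻¹ + D / ((k:ℝ)*Real.log k)
        = ((k:ℝ) * Real.log k - k + D) / ((k:ℝ)*Real.log k) := by
      field_simp
    rw [heq, div_le_div_iff_of_pos_right (by positivity)]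
    exact h
  · filter_upwards [eventually_ge_atTop 2] with k hk
    have hk0 : (0:ℝ) < k := by positivity
    have hlk : 0 < Real.log k := Real.log_pos (by exact_mod_cast hk)
    have h := (key k hk).2
    have heq : 1 + Real.log (1+c) * (Real.log k)⁻¹ + D / ((k:ℝ)*Real.log k)
        = ((k:ℝ) * Real.log k + (k:ℝ) * Real.log (1+c) + D) / ((k:ℝ)*Real.log k) := by
      field_simp
    rw [heq, div_le_div_iff_of_pos_right (by positivity)]
    exact h

lemma lambda_bounds {b ν : ℝ} (hb : 0 < b) (hν : 1 ≤ ν) (hQb : (b/2)^2/(ν+1) ≤ 1/3) :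
    Real.pi * (3*b^2/32) * ((b/4)^ν)^2 / (Real.Gamma (ν+1))^2
      ≤ Real.pi * ∫ r in (0:ℝ)..b, (besselJR ν r)^2 * r ∧
    Real.pi * ∫ r in (0:ℝ)..b, (besselJR ν r)^2 * r
      ≤ Real.pi * (9*b^2/8) * ((b/2)^ν)^2 / (Real.Gamma (ν+1))^2 := by
  have hΓ : 0 < Real.Gamma (ν+1) := Real.Gamma_pos_of_pos (by linarith)
  set Γν := Real.Gamma (ν+1)
  set J := besselJR ν with hJ
  -- pointwise bounds on Icc 0 b
  have hQr : ∀ r, r ∈ Set.Icc (0:ℝ) b → (r/2)^2/(ν+1) ≤ 1/3 := by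
    intro r ⟨h0, h1⟩
    refine le_trans ?_ hQb
    gcongr <;> linarith
  have hJub : ∀ r ∈ Set.Icc (0:ℝ) b, J r ≤ (3/2) * ((r/2)^ν / Γν) := by
    intro r hr
    have := abs_le.mp (bessel_squeeze hν hr.1 (hQr r hr))
    linarith [this.2]
  have hJlb : ∀ r ∈ Set.Icc (0:ℝ) b, (1/2) * ((r/2)^ν / Γν) ≤ J r := by
    intro r hr
    have := abs_le.mp (bessel_squeeze hν hr.1 (hQr r hr))
    linarith [this.1]
  have ht_nonneg : ∀ r : ℝ, 0 ≤ r → 0 ≤ (r/2)^ν / Γν := by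
    intro r h0; positivity
  -- continuity and integrability
  have hcont : ContinuousOn (fun r => (J r)^2 * r) (Set.Icc 0 b) :=
    ((bessel_cont hν hb hQb).pow 2).mul continuousOn_id
  have hInt : IntervalIntegrable (fun r => (J r)^2 * r) MeasureTheory.volume 0 b :=
    ContinuousOn.intervalIntegrable (by rw [Set.uIcc_of_le hb.le]; exact hcont)
  constructor
  · -- lower bound
    set q := (1/4) * ((b/4)^ν / Γν)^2 with hq
    have hq0 : 0 ≤ q := by positivity
    have hsub1 : Set.uIcc (0:ℝ) (b/2) ⊆ Set.uIcc (0:ℝ) b := by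
      rw [Set.uIcc_of_le (by linarith), Set.uIcc_of_le hb.le]
      exact Set.Icc_subset_Icc le_rfl (by linarith)
    have hsub2 : Set.uIcc (b/2) b ⊆ Set.uIcc (0:ℝ) b := by
      rw [Set.uIcc_of_le (by linarith), Set.uIcc_of_le hb.le]
      exact Set.Icc_subset_Icc (by linarith) le_rfl
    have hI1 := hInt.mono_set hsub1
    have hI2 := hInt.mono_set hsub2
    have hsplit : (∫ r in (0:ℝ)..b, (J r)^2 * r)
        = (∫ r in (0:ℝ)..(b/2), (J r)^2 * r) + ∫ r in (b/2)..b, (J r)^2 * r :=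
      (intervalIntegral.integral_add_adjacent_intervals hI1 hI2).symm
    have hpos1 : 0 ≤ ∫ r in (0:ℝ)..(b/2), (J r)^2 * r := by
      apply intervalIntegral.integral_nonneg (by linarith)
      intro r hr
      exact mul_nonneg (sq_nonneg _) hr.1
    have hpts : ∀ r ∈ Set.Icc (b/2) b, q * r ≤ (J r)^2 * r := by
      intro r hr
      have hr0 : (0:ℝ) ≤ r := by linarith [hr.1, hb]
      have hrI : r ∈ Set.Icc (0:ℝ) b := ⟨hr0, hr.2⟩
      have h1 : (b/4)^ν / Γν ≤ (r/2)^ν / Γν := by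
        rw [div_le_div_iff_of_pos_right hΓ]
        exact Real.rpow_le_rpow (by linarith) (by linarith [hr.1]) (by linarith)
      have h2 : (1/2) * ((b/4)^ν/Γν) ≤ J r :=
        le_trans (by nlinarith [ht_nonneg (b/2) (by linarith), hΓ,
          Real.rpow_nonneg (show (0:ℝ) ≤ b/4 by linarith) ν]) (hJlb r hrI)
      have h3 : q ≤ (J r)^2 := by
        have h4 : 0 ≤ (1/2) * ((b/4)^ν/Γν) := by positivity
        nlinarith [h2, h4]
      exact mul_le_mul_of_nonneg_right h3 hr0
    have hmono : (∫ r in (b/2)..b, q * r) ≤ ∫ r in (b/2)..b, (J r)^2 * r := by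
      apply intervalIntegral.integral_mono_on (by linarith) _ hI2 hpts
      exact (continuous_const.mul continuous_id).intervalIntegrable _ _
    have hcomp : (∫ r in (b/2)..b, q * r) = q * (3*b^2/8) := by
      rw [intervalIntegral.integral_const_mul, integral_id]
      ring
    have : Real.pi * (3*b^2/32) * ((b/4)^ν)^2 / Γν^2 = Real.pi * (q * (3*b^2/8)) := by
      rw [hq]; field_simp; ring
    rw [this]
    apply mul_le_mul_of_nonneg_left _ Real.pi_pos.le
    rw [hsplit]
    calc q * (3*b^2/8) = ∫ r in (b/2)..b, q * r := hcomp.symm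
      _ ≤ ∫ r in (b/2)..b, (J r)^2 * r := hmono
      _ ≤ (∫ r in (0:ℝ)..(b/2), (J r)^2 * r) + ∫ r in (b/2)..b, (J r)^2 * r := by linarith
  · -- upper bound
    set Tb := (b/2)^ν / Γν with hTb
    have hTb0 : 0 ≤ Tb := ht_nonneg b hb.le |>.trans_eq (by rw [hTb])
    have hpts : ∀ r ∈ Set.Icc (0:ℝ) b, (J r)^2 * r ≤ (9/4) * Tb^2 * r := by
      intro r hr
      have h1 : (r/2)^ν / Γν ≤ Tb := by
        rw [hTb, div_le_div_iff_of_pos_right hΓ]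
        exact Real.rpow_le_rpow (by linarith [hr.1]) (by linarith [hr.2]) (by linarith)
      have h2 : J r ≤ (3/2) * Tb := le_trans (hJub r hr) (by nlinarith)
      have h3 : -((3/2)*Tb) ≤ J r :=
        le_trans (by nlinarith [ht_nonneg r hr.1]) (hJlb r hr)
      have h4 : (J r)^2 ≤ (9/4) * Tb^2 := by nlinarith
      exact mul_le_mul_of_nonneg_right h4 hr.1
    have hmono : (∫ r in (0:ℝ)..b, (J r)^2 * r) ≤ ∫ r in (0:ℝ)..b, (9/4) * Tb^2 * r := by
      apply intervalIntegral.integral_mono_on hb.le hInt _ hpts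
      exact (continuous_const.mul continuous_id).intervalIntegrable _ _
    have hcomp : (∫ r in (0:ℝ)..b, (9/4) * Tb^2 * r) = (9/4) * Tb^2 * (b^2/2) := by
      rw [intervalIntegral.integral_const_mul, integral_id]
      ring
    have heq : Real.pi * (9*b^2/8) * ((b/2)^ν)^2 / Γν^2 = Real.pi * ((9/4) * Tb^2 * (b^2/2)) := by
      rw [hTb]; field_simp; ring
    rw [heq]
    apply mul_le_mul_of_nonneg_left _ Real.pi_pos.le
    rw [← hcomp]
    exact hmono

lemma helper_tendsto (c C L : ℝ) (hc : 0 ≤ c) :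
    Tendsto (fun k : ℕ => (C + 2*((k:ℝ)+c)*L - 2*Real.log (Real.Gamma ((k:ℝ)+c+1)))
      / ((k:ℝ)*Real.log k)) atTop (nhds (-2)) := by
  have hG := logGamma_asymp c hc
  have h2 : Tendsto (fun k : ℕ => C/((k:ℝ)*Real.log k) + (2*L)*(Real.log k)⁻¹
      + (2*L*c)/((k:ℝ)*Real.log k)
      - 2*(Real.log (Real.Gamma ((k:ℝ)+c+1))/((k:ℝ)*Real.log k))) atTop (nhds (0 + 2*L*0 + 0 - 2*1)) :=
    ((((const_div_klogk C).add (invlog_to_zero.const_mul (2*L))).add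
      (const_div_klogk (2*L*c))).sub (hG.const_mul 2))
  rw [show (0:ℝ)+2*L*0+0-2*1 = -2 by ring] at h2
  apply h2.congr'
  filter_upwards [eventually_ge_atTop 2] with k hk
  have hk0 : (0:ℝ) < k := by positivity
  have hlk : 0 < Real.log k := Real.log_pos (by exact_mod_cast hk)
  field_simp
  ring

theorem stmt19 (d : ℕ) (hd : 2 ≤ d) (b : ℝ) (hb : 0 < b)
    (Λ : ℕ → ℝ)
    (hΛ : ∀ k, Λ k =
      Real.pi * ∫ r in (0 : ℝ)..b, (besselJR ((k : ℝ) + ((d : ℝ) - 2) / 2) r) ^ 2 * r) :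
    Filter.Tendsto (fun k : ℕ => Real.log (Λ k) / ((k : ℝ) * Real.log k))
      Filter.atTop (nhds (-2)) := by
  have hd2 : (2:ℝ) ≤ d := by exact_mod_cast hd
  set c := ((d:ℝ) - 2)/2 with hcdef
  have hc : 0 ≤ c := by rw [hcdef]; linarith
  have key : ∀ k : ℕ, max 2 ⌈3*(b/2)^2⌉₊ ≤ k →
      (Real.log (Real.pi * (3*b^2/32)) + 2*((k:ℝ)+c)*Real.log (b/4)
        - 2*Real.log (Real.Gamma ((k:ℝ)+c+1))) / ((k:ℝ)*Real.log k)
        ≤ Real.log (Λ k) / ((k:ℝ)*Real.log k) ∧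
      Real.log (Λ k) / ((k:ℝ)*Real.log k) ≤
      (Real.log (Real.pi * (9*b^2/8)) + 2*((k:ℝ)+c)*Real.log (b/2)
        - 2*Real.log (Real.Gamma ((k:ℝ)+c+1))) / ((k:ℝ)*Real.log k) := by
    intro k hk
    have hk2 : 2 ≤ k := le_trans (le_max_left _ _) hk
    have hkc : (⌈3*(b/2)^2⌉₊ : ℕ) ≤ k := le_trans (le_max_right _ _) hk
    have hk0 : (0:ℝ) < k := by positivity
    have hk2' : (2:ℝ) ≤ k := by exact_mod_cast hk2
    have hlk : 0 < Real.log k := Real.log_pos (by exact_mod_cast hk2)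
    have hkk : 0 < (k:ℝ) * Real.log k := by positivity
    have hν : 1 ≤ (k:ℝ) + c := by linarith
    have hkcr : 3*(b/2)^2 ≤ (k:ℝ) := le_trans (Nat.le_ceil _) (by exact_mod_cast hkc)
    have hQb : (b/2)^2/(((k:ℝ)+c)+1) ≤ 1/3 := by
      rw [div_le_iff₀ (by linarith)]
      linarith
    have hΓ : 0 < Real.Gamma (((k:ℝ)+c)+1) := Real.Gamma_pos_of_pos (by linarith)
    obtain ⟨hlb, hub⟩ := lambda_bounds hb hν hQb
    have hA0 : 0 < Real.pi * (3*b^2/32) * ((b/4)^((k:ℝ)+c))^2 / (Real.Gamma (((k:ℝ)+c)+1))^2 := by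
      have := Real.pi_pos
      positivity
    have hΛpos : 0 < Λ k := by
      rw [hΛ k]; exact lt_of_lt_of_le hA0 hlb
    have hlogA : Real.log (Real.pi * (3*b^2/32) * ((b/4)^((k:ℝ)+c))^2 / (Real.Gamma (((k:ℝ)+c)+1))^2)
        = Real.log (Real.pi * (3*b^2/32)) + 2*((k:ℝ)+c)*Real.log (b/4)
          - 2*Real.log (Real.Gamma ((k:ℝ)+c+1)) := by
      have h1 : Real.pi * (3*b^2/32) ≠ 0 := by positivity
      have h2 : ((b/4 : ℝ)^((k:ℝ)+c))^2 ≠ 0 := by positivity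
      have h3 : (Real.Gamma (((k:ℝ)+c)+1))^2 ≠ 0 := by positivity
      rw [Real.log_div (by positivity) h3, Real.log_mul h1 h2, Real.log_pow, Real.log_pow,
        Real.log_rpow (by positivity)]
      push_cast; ring
    have hlogB : Real.log (Real.pi * (9*b^2/8) * ((b/2)^((k:ℝ)+c))^2 / (Real.Gamma (((k:ℝ)+c)+1))^2)
        = Real.log (Real.pi * (9*b^2/8)) + 2*((k:ℝ)+c)*Real.log (b/2)
          - 2*Real.log (Real.Gamma ((k:ℝ)+c+1)) := by
      have h1 : Real.pi * (9*b^2/8) ≠ 0 := by positivity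
      have h2 : ((b/2 : ℝ)^((k:ℝ)+c))^2 ≠ 0 := by positivity
      have h3 : (Real.Gamma (((k:ℝ)+c)+1))^2 ≠ 0 := by positivity
      rw [Real.log_div (by positivity) h3, Real.log_mul h1 h2, Real.log_pow, Real.log_pow,
        Real.log_rpow (by positivity)]
      push_cast; ring
    constructor
    · rw [div_le_div_iff_of_pos_right hkk, ← hlogA]
      apply Real.log_le_log hA0
      rw [hΛ k]; exact hlb
    · rw [div_le_div_iff_of_pos_right hkk, ← hlogB]
      apply Real.log_le_log hΛpos
      rw [hΛ k]; exact hub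
  apply tendsto_of_tendsto_of_tendsto_of_le_of_le'
    (helper_tendsto c (Real.log (Real.pi * (3*b^2/32))) (Real.log (b/4)) hc)
    (helper_tendsto c (Real.log (Real.pi * (9*b^2/8))) (Real.log (b/2)) hc)
  · filter_upwards [eventually_ge_atTop (max 2 ⌈3*(b/2)^2⌉₊)] with k hk
    exact (key k hk).1
  · filter_upwards [eventually_ge_atTop (max 2 ⌈3*(b/2)^2⌉₊)] with k hk
    exact (key k hk).2
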